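/- arXiv:1802.01062 — 15 statements merged into one kernel-verified Lean document; each statement's English description precedes it below -/
import Mathlib

section
/- Let f_ref, f_k, f_{k+1} be real numbers, let G ≥ 0 be a real number (representing the gradient norm ‖g(x_k)‖), and let κ, ζ be real numbers with 0 < κ ≤ ζ. Suppose that G² ≥ κ(f_k − f_ref) ≥ 0 (i.e., the iterate lies in subregion R_1^2) and that the step yields the objective reduction f_k − f_{k+1} ≥ G²/ζ. Then the objective gap decreases at a linear rate: f_{k+1} − f_ref ≤ (1 − κ/ζ)(f_k − f_ref), where κ/ζ ∈ (0,1]. -/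
/-- Theorem 2.1(a): linear decrease of the objective gap in subregion `R_1^2`. -/
theorem rc_region1_sub2_linear
    (f_ref f_k f_k1 G κ ζ : ℝ)
    (hG : 0 ≤ G) (hκ : 0 < κ) (hκζ : κ ≤ ζ)
    (h1 : G ^ 2 ≥ κ * (f_k - f_ref)) (h2 : κ * (f_k - f_ref) ≥ 0)
    (hdec : f_k - f_k1 ≥ G ^ 2 / ζ) :
    f_k1 - f_ref ≤ (1 - κ / ζ) * (f_k - f_ref) ∧ 0 < κ / ζ ∧ κ / ζ ≤ 1 := by
  have hζ : 0 < ζ := lt_of_lt_of_le hκ hκζ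
  refine ⟨?_, div_pos hκ hζ, div_le_one_of_le₀ hκζ hζ.le⟩
  have h3 : κ * (f_k - f_ref) / ζ ≤ G ^ 2 / ζ := div_le_div_of_nonneg_right h1 hζ.le
  have : κ * (f_k - f_ref) / ζ ≤ f_k - f_k1 := le_trans h3 hdec
  have := sub_le_sub_left this (f_k - f_ref)
  calc f_k1 - f_ref = (f_k - f_ref) - (f_k - f_k1) := by ring
    _ ≤ (f_k - f_ref) - κ * (f_k - f_ref) / ζ := by linarith
    _ = (1 - κ / ζ) * (f_k - f_ref) := by field_simp
end

section
/- Let f_ref, f_k, f_{k+1} be real numbers, let G ≥ 0 be a real number (representing the gradient norm ‖g(x_k)‖), and let κ, ζ be real numbers with 0 < κ ≤ ζ. Suppose that G ≥ κ(f_k − f_ref) ≥ 0 but G² < κ(f_k − f_ref) (i.e., the iterate lies in subregion R_1^1), and that f_k − f_{k+1} ≥ G²/ζ. Then it must hold that κ(f_k − f_ref) < 1, and the objective gap decreases at a sublinear rate: f_{k+1} − f_ref ≤ (1 − (κ²/ζ)(f_k − f_ref))(f_k − f_ref). -/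
/-- Theorem 2.1(b): sublinear decrease of the objective gap in subregion `R_1^1`. -/
theorem rc_region1_sub1_sublinear
    (f_ref f_k f_k1 G κ ζ : ℝ)
    (hG : 0 ≤ G) (hκ : 0 < κ) (hκζ : κ ≤ ζ)
    (h1 : G ≥ κ * (f_k - f_ref)) (h2 : κ * (f_k - f_ref) ≥ 0)
    (h3 : G ^ 2 < κ * (f_k - f_ref))
    (hdec : f_k - f_k1 ≥ G ^ 2 / ζ) :
    κ * (f_k - f_ref) < 1 ∧
      f_k1 - f_ref ≤ (1 - κ ^ 2 / ζ * (f_k - f_ref)) * (f_k - f_ref) := by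
  have hζ : 0 < ζ := lt_of_lt_of_le hκ hκζ
  constructor
  · nlinarith [sq_nonneg (G - 1)]
  · have hsq : (κ * (f_k - f_ref)) ^ 2 ≤ G ^ 2 := by nlinarith
    have hdec' : f_k - f_k1 ≥ (κ * (f_k - f_ref)) ^ 2 / ζ := by
      exact le_trans (by gcongr) hdec
    have : (κ * (f_k - f_ref)) ^ 2 / ζ = κ ^ 2 / ζ * (f_k - f_ref) * (f_k - f_ref) := by
      ring
    nlinarith
end

section
/- Let f_ref, f_0, f_k, f_{k+1} be real numbers with f_{k+1} ≤ f_0 and f_ref ≤ f_{k+1}, let G ≥ 0 be a real number (representing the gradient norm ‖g(x_{k+1})‖ at the new iterate), and let κ > 0, ζ > 0. Suppose that G² ≥ κ(f_{k+1} − f_ref) ≥ 0 (i.e., x_{k+1} lies in subregion R_1^2), that f_k − f_{k+1} ≥ G^{3/2}/ζ, and that f_k − f_ref ≥ κ³/ζ⁴. Then the objective gap decreases at a linear rate: f_{k+1} − f_ref ≤ ((f_0 − f_ref)^{1/4} / (κ^{3/4}/ζ + (f_0 − f_ref)^{1/4})) · (f_k − f_ref). -/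
/-- Theorem 2.2(a), first case: linear decrease of the objective gap when
`x_{k+1} ∈ R_1^2` and `f_k - f_ref ≥ κ³/ζ⁴`. -/
theorem rc_region1_sub2_newton_linear
    (f_ref f_0 f_k f_k1 G κ ζ : ℝ)
    (hmono : f_k1 ≤ f_0) (href : f_ref ≤ f_k1)
    (hG : 0 ≤ G) (hκ : 0 < κ) (hζ : 0 < ζ)
    (h1 : G ^ 2 ≥ κ * (f_k1 - f_ref)) (h2 : κ * (f_k1 - f_ref) ≥ 0)
    (hdec : f_k - f_k1 ≥ G ^ ((3 : ℝ) / 2) / ζ)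
    (hlarge : f_k - f_ref ≥ κ ^ 3 / ζ ^ 4) :
    f_k1 - f_ref ≤
      ((f_0 - f_ref) ^ ((1 : ℝ) / 4) /
        (κ ^ ((3 : ℝ) / 4) / ζ + (f_0 - f_ref) ^ ((1 : ℝ) / 4))) * (f_k - f_ref) := by
  set Δ1 := f_k1 - f_ref with hΔ1def
  set Δ0 := f_0 - f_ref with hΔ0def
  have hΔ1 : 0 ≤ Δ1 := nonneg_of_mul_nonneg_right h2 hκ
  have hΔ01 : Δ1 ≤ Δ0 := by rw [hΔ1def, hΔ0def]; linarith
  -- G^(3/2) ≥ (κ Δ1)^(3/4)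
  have hmul : (κ * Δ1) ^ ((3 : ℝ) / 4) = κ ^ ((3 : ℝ) / 4) * Δ1 ^ ((3 : ℝ) / 4) :=
    Real.mul_rpow hκ.le hΔ1
  have hpow : κ ^ ((3 : ℝ) / 4) * Δ1 ^ ((3 : ℝ) / 4) ≤ G ^ ((3 : ℝ) / 2) := by
    rw [← hmul]
    calc (κ * Δ1) ^ ((3 : ℝ) / 4)
        ≤ (G ^ 2) ^ ((3 : ℝ) / 4) :=
          Real.rpow_le_rpow h2 h1 (by norm_num : (0:ℝ) ≤ 3 / 4)
      _ = G ^ ((3 : ℝ) / 2) := by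
          rw [← Real.rpow_natCast G 2, ← Real.rpow_mul hG]; norm_num
  have hprod : Δ1 ^ ((1 : ℝ) / 4) * Δ1 ^ ((3 : ℝ) / 4) = Δ1 := by
    rw [← Real.rpow_add_of_nonneg hΔ1 (by norm_num) (by norm_num)]
    norm_num
  have hle14 : Δ1 ^ ((1 : ℝ) / 4) ≤ Δ0 ^ ((1 : ℝ) / 4) :=
    Real.rpow_le_rpow hΔ1 hΔ01 (by norm_num)
  have hκ34 : 0 < κ ^ ((3 : ℝ) / 4) := Real.rpow_pos_of_pos hκ _
  have hΔ0nn : 0 ≤ Δ0 ^ ((1 : ℝ) / 4) := Real.rpow_nonneg (by linarith) _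
  have hΔ1nn34 : 0 ≤ Δ1 ^ ((3 : ℝ) / 4) := Real.rpow_nonneg hΔ1 _
  have hD : 0 < κ ^ ((3 : ℝ) / 4) / ζ + Δ0 ^ ((1 : ℝ) / 4) := by positivity
  rw [div_mul_eq_mul_div, le_div_iff₀ hD]
  have h3 : κ ^ ((3 : ℝ) / 4) * Δ1 ^ ((3 : ℝ) / 4) / ζ ≤ G ^ ((3 : ℝ) / 2) / ζ := by
    gcongr
  have hk : f_k - f_ref ≥ Δ1 + κ ^ ((3 : ℝ) / 4) / ζ * Δ1 ^ ((3 : ℝ) / 4) := by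
    have : κ ^ ((3 : ℝ) / 4) / ζ * Δ1 ^ ((3 : ℝ) / 4)
        = κ ^ ((3 : ℝ) / 4) * Δ1 ^ ((3 : ℝ) / 4) / ζ := by ring
    rw [hΔ1def]; linarith [hdec, h3]
  have hc : 0 ≤ κ ^ ((3 : ℝ) / 4) / ζ := by positivity
  have key : κ ^ ((3 : ℝ) / 4) / ζ * (Δ1 ^ ((1 : ℝ) / 4) * Δ1 ^ ((3 : ℝ) / 4))
      ≤ κ ^ ((3 : ℝ) / 4) / ζ * (Δ0 ^ ((1 : ℝ) / 4) * Δ1 ^ ((3 : ℝ) / 4)) :=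
    mul_le_mul_of_nonneg_left (mul_le_mul_of_nonneg_right hle14 hΔ1nn34) hc
  rw [hprod] at key
  nlinarith [mul_le_mul_of_nonneg_left hk hΔ0nn, key, hΔ0nn, hc]
end

section
/- Let f_ref, f_k, f_{k+1} be real numbers with f_ref ≤ f_{k+1}, let G ≥ 0 be a real number (representing ‖g(x_{k+1})‖), and let κ > 0, ζ > 0. Suppose that G² ≥ κ(f_{k+1} − f_ref) ≥ 0 (i.e., x_{k+1} lies in subregion R_1^2), that f_k − f_{k+1} ≥ G^{3/2}/ζ, and that f_k − f_ref < κ³/ζ⁴. Then the objective gap decreases at a superlinear rate: f_{k+1} − f_ref ≤ (ζ⁴(f_k − f_ref)/κ³)^{1/3} · (f_k − f_ref). -/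
/-- Theorem 2.2(a), second case: superlinear decrease of the objective gap when
`x_{k+1} ∈ R_1^2` and `f_k - f_ref < κ³/ζ⁴`. -/
theorem rc_region1_sub2_newton_superlinear
    (f_ref f_k f_k1 G κ ζ : ℝ)
    (href : f_ref ≤ f_k1)
    (hG : 0 ≤ G) (hκ : 0 < κ) (hζ : 0 < ζ)
    (h1 : G ^ 2 ≥ κ * (f_k1 - f_ref)) (h2 : κ * (f_k1 - f_ref) ≥ 0)
    (hdec : f_k - f_k1 ≥ G ^ ((3 : ℝ) / 2) / ζ)
    (hsmall : f_k - f_ref < κ ^ 3 / ζ ^ 4) :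
    f_k1 - f_ref ≤ (ζ ^ 4 * (f_k - f_ref) / κ ^ 3) ^ ((1 : ℝ) / 3) * (f_k - f_ref) := by
  set d1 := f_k1 - f_ref with hd1def
  set d0 := f_k - f_ref with hd0def
  have hd1 : 0 ≤ d1 := by nlinarith
  have hGr : 0 ≤ G ^ ((3:ℝ)/2) := Real.rpow_nonneg hG _
  have hd0 : 0 ≤ d0 := by
    have : 0 ≤ G ^ ((3:ℝ)/2) / ζ := div_nonneg hGr hζ.le
    have : 0 ≤ f_k - f_k1 := le_trans this hdec
    simp only [hd0def, hd1def] at *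
    linarith
  -- G^{3/2} = (G^2)^{3/4}
  have hGsq : (G ^ 2 : ℝ) ^ ((3:ℝ)/4) = G ^ ((3:ℝ)/2) := by
    rw [← Real.rpow_natCast G 2, ← Real.rpow_mul hG]
    norm_num
  have h32 : (κ * d1) ^ ((3:ℝ)/4) ≤ G ^ ((3:ℝ)/2) := by
    rw [← hGsq]
    exact Real.rpow_le_rpow h2 h1 (by norm_num)
  have hA : (κ * d1) ^ ((3:ℝ)/4) ≤ ζ * d0 := by
    have h1' : G ^ ((3:ℝ)/2) ≤ ζ * (f_k - f_k1) := by
      rw [ge_iff_le, div_le_iff₀ hζ] at hdec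
      linarith [hdec]
    have h2' : ζ * (f_k - f_k1) ≤ ζ * d0 := by
      apply mul_le_mul_of_nonneg_left _ hζ.le
      simp only [hd0def]; linarith
    exact le_trans h32 (le_trans h1' h2')
  have hkey : κ * d1 ≤ (ζ * d0) ^ ((4:ℝ)/3) := by
    have := Real.rpow_le_rpow (Real.rpow_nonneg h2 _) hA (by norm_num : (0:ℝ) ≤ 4/3)
    rwa [← Real.rpow_mul h2, show ((3:ℝ)/4) * (4/3) = 1 by norm_num, Real.rpow_one] at this
  have cube : ∀ x : ℝ, 0 ≤ x → ((x ^ 3 : ℝ)) ^ ((1:ℝ)/3) = x := by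
    intro x hx
    rw [← Real.rpow_natCast x 3, ← Real.rpow_mul hx]
    norm_num
  have hE : (ζ ^ 4 * d0 / κ ^ 3) ^ ((1:ℝ)/3) * d0 = (ζ * d0) ^ ((4:ℝ)/3) / κ := by
    have hb : (0:ℝ) ≤ ζ ^ 4 * d0 / κ ^ 3 := by positivity
    calc (ζ ^ 4 * d0 / κ ^ 3) ^ ((1:ℝ)/3) * d0
        = (ζ ^ 4 * d0 / κ ^ 3) ^ ((1:ℝ)/3) * (d0 ^ 3) ^ ((1:ℝ)/3) := by
          rw [cube d0 hd0]
      _ = (ζ ^ 4 * d0 / κ ^ 3 * d0 ^ 3) ^ ((1:ℝ)/3) := by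
          rw [← Real.mul_rpow hb (by positivity)]
      _ = ((ζ * d0) ^ 4 / κ ^ 3) ^ ((1:ℝ)/3) := by
          congr 1; field_simp
      _ = ((ζ * d0) ^ 4) ^ ((1:ℝ)/3) / (κ ^ 3) ^ ((1:ℝ)/3) := by
          rw [Real.div_rpow (by positivity) (by positivity)]
      _ = (ζ * d0) ^ ((4:ℝ)/3) / κ := by
          rw [cube κ hκ.le, ← Real.rpow_natCast (ζ * d0) 4,
            ← Real.rpow_mul (by positivity)]
          norm_num
  rw [hE, le_div_iff₀ hκ]
  nlinarith [hkey]
end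

section
/- Let f_ref, f_k, f_{k+1} be real numbers, let G ≥ 0 be a real number (representing ‖g(x_{k+1})‖), and let κ > 0, ζ > 0. Suppose that G ≥ κ(f_{k+1} − f_ref) ≥ 0 but G² < κ(f_{k+1} − f_ref) (i.e., x_{k+1} lies in subregion R_1^1), and that f_k − f_{k+1} ≥ G^{3/2}/ζ. Then κ(f_{k+1} − f_ref) < 1; moreover, if additionally f_k − f_ref ≥ ζ²/κ³, then the objective gap decreases at a superlinear rate: f_{k+1} − f_ref ≤ (ζ²/(κ³(f_k − f_ref)))^{1/3} · (f_k − f_ref). -/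
private lemma cube_rpow_third {x : ℝ} (hx : 0 ≤ x) : (x ^ ((1:ℝ)/3)) ^ (3:ℕ) = x := by
  rw [← Real.rpow_natCast (x ^ ((1:ℝ)/3)) 3, ← Real.rpow_mul hx]
  norm_num

/-- Theorem 2.2(b), first case: `κ(f_{k+1} − f_ref) < 1`, and superlinear decrease
of the objective gap when `x_{k+1} ∈ R_1^1` and `f_k − f_ref ≥ ζ²/κ³`. -/
theorem rc_region1_sub1_newton_superlinear
    (f_ref f_k f_k1 G κ ζ : ℝ)
    (hG : 0 ≤ G) (hκ : 0 < κ) (hζ : 0 < ζ)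
    (h1 : G ≥ κ * (f_k1 - f_ref)) (h2 : κ * (f_k1 - f_ref) ≥ 0)
    (h3 : G ^ 2 < κ * (f_k1 - f_ref))
    (hdec : f_k - f_k1 ≥ G ^ ((3 : ℝ) / 2) / ζ) :
    κ * (f_k1 - f_ref) < 1 ∧
      (f_k - f_ref ≥ ζ ^ 2 / κ ^ 3 →
        f_k1 - f_ref ≤
          (ζ ^ 2 / (κ ^ 3 * (f_k - f_ref))) ^ ((1 : ℝ) / 3) * (f_k - f_ref)) := by
  set d := f_k1 - f_ref with hd
  set D := f_k - f_ref with hD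
  have hA2 : (κ * d) ^ 2 ≤ G ^ 2 := pow_le_pow_left₀ h2 h1 2
  constructor
  · nlinarith
  · intro hDlb
    have hDpos : 0 < D := lt_of_lt_of_le (by positivity) hDlb
    have hd0 : 0 ≤ d := nonneg_of_mul_nonneg_right h2 hκ
    -- ζ (D - d) ≥ G^{3/2}
    have hζDd : G ^ ((3:ℝ)/2) ≤ ζ * (D - d) := by
      have := (div_le_iff₀ hζ).mp (by linarith [hdec] : G ^ ((3:ℝ)/2) / ζ ≤ D - d)
      linarith [this]
    have hkd : (κ * d) ^ ((3:ℝ)/2) ≤ ζ * D := by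
      have h5 : (κ * d) ^ ((3:ℝ)/2) ≤ G ^ ((3:ℝ)/2) :=
        Real.rpow_le_rpow h2 h1 (by norm_num)
      nlinarith [mul_nonneg hζ.le hd0]
    -- κ d ≤ (ζ D)^{2/3}
    have hkd2 : κ * d ≤ (ζ * D) ^ ((2:ℝ)/3) := by
      have := Real.rpow_le_rpow (by positivity) hkd (by norm_num : (0:ℝ) ≤ 2/3)
      rwa [← Real.rpow_mul h2, show ((3:ℝ)/2) * (2/3) = 1 by norm_num, Real.rpow_one] at this
    -- identify RHS
    have key : (ζ ^ 2 / (κ ^ 3 * D)) ^ ((1:ℝ)/3) * D = (ζ * D) ^ ((2:ℝ)/3) / κ := by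
      have hx : (0:ℝ) ≤ ζ ^ 2 / (κ ^ 3 * D) := by positivity
      have hy : (0:ℝ) ≤ ζ * D := by positivity
      have ha : (0:ℝ) ≤ (ζ ^ 2 / (κ ^ 3 * D)) ^ ((1:ℝ)/3) * D := by positivity
      have hb : (0:ℝ) ≤ (ζ * D) ^ ((2:ℝ)/3) / κ := by positivity
      have hcube : ((ζ ^ 2 / (κ ^ 3 * D)) ^ ((1:ℝ)/3) * D) ^ (3:ℕ)
          = ((ζ * D) ^ ((2:ℝ)/3) / κ) ^ (3:ℕ) := by
        rw [mul_pow, div_pow, cube_rpow_third hx]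
        rw [← Real.rpow_natCast ((ζ * D) ^ ((2:ℝ)/3)) 3, ← Real.rpow_mul hy,
          show ((2:ℝ)/3) * ((3:ℕ):ℝ) = 2 by norm_num, Real.rpow_two]
        field_simp
      exact (pow_left_strictMonoOn₀ (three_ne_zero)).injOn ha hb hcube
    rw [key]
    rw [le_div_iff₀ hκ]
    linarith [hkd2]
end

section
/- Let f_ref, f_k, f_{k+1} be real numbers, let G ≥ 0 be a real number (representing ‖g(x_{k+1})‖), and let κ > 0, ζ > 0. Suppose that G ≥ κ(f_{k+1} − f_ref) ≥ 0 but G² < κ(f_{k+1} − f_ref) (i.e., x_{k+1} lies in subregion R_1^1), that f_k − f_{k+1} ≥ G^{3/2}/ζ, and that 0 ≤ f_k − f_ref < ζ²/κ³. Then the objective gap decreases at a sublinear rate: f_{k+1} − f_ref ≤ (1 / (1 + (κ^{3/2}/ζ)·((√2 − 1)/√2)·√(f_k − f_ref)))² · (f_k − f_ref). -/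
/-- Key polynomial lemma. -/
lemma rc_key_aux (s t u K ζ s2 : ℝ) (hs0 : 0 ≤ s) (ht0 : 0 ≤ t) (hu0 : 0 ≤ u)
    (hK0 : 0 < K) (hζ : 0 < ζ) (hs2 : s2 ^ 2 = 2) (hs2pos : 0 < s2)
    (hE : u * ζ * s2 = K * (s2 - 1) * s)
    (hA : ζ * (s ^ 2 - t ^ 2) ≥ K * t ^ 3)
    (hB : K * s < ζ) :
    t ^ 2 * (1 + u) ^ 2 ≤ s ^ 2 := by
  by_contra hC
  push_neg at hC
  have hs2gt1 : 1 < s2 := by nlinarith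
  have htpos : 0 < t := by
    rcases ht0.lt_or_eq with h | h
    · exact h
    · exfalso; rw [← h] at hC; nlinarith [sq_nonneg s, sq_nonneg (1 + u)]
  have hspos : 0 < s := by
    rcases hs0.lt_or_eq with h | h
    · exact h
    · exfalso
      have h1 : 0 < ζ * (s ^ 2 - t ^ 2) :=
        lt_of_lt_of_le (mul_pos hK0 (pow_pos htpos 3)) hA
      rw [← h] at h1
      nlinarith [mul_pos hζ (mul_pos htpos htpos)]
  have hts : s < t * (1 + u) := by nlinarith [mul_nonneg ht0 (by linarith : (0:ℝ) ≤ 1 + u)]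
  have hKt : K * t < ζ * (2 * u + u ^ 2) := by nlinarith [mul_pos htpos htpos]
  have hu_pos : 0 < u := by
    rcases hu0.lt_or_eq with h | h
    · exact h
    · exfalso; rw [← h] at hKt; nlinarith [mul_pos hK0 htpos]
  have hKs : K * s < ζ * (2 * u + u ^ 2) * (1 + u) := by
    nlinarith [mul_lt_mul_of_pos_left hts hK0, mul_lt_mul_of_pos_right hKt (by linarith : (0:ℝ) < 1 + u)]
  have hub : u * s2 < s2 - 1 := by nlinarith [mul_lt_mul_of_pos_left hB (by linarith : (0:ℝ) < s2 - 1)]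
  have hfin : u * s2 < (s2 - 1) * (2 * u + u ^ 2) * (1 + u) := by
    nlinarith [mul_lt_mul_of_pos_left hKs (by linarith : (0:ℝ) < s2 - 1)]
  nlinarith [mul_pos hu_pos hu_pos, mul_pos (mul_pos hu_pos hu_pos) hu_pos,
    mul_lt_mul_of_pos_left hub hu_pos, mul_lt_mul_of_pos_left hub (mul_pos hu_pos hu_pos),
    mul_pos hu_pos hs2pos]

set_option maxHeartbeats 1000000 in
/-- Theorem 2.2(b), second case: sublinear decrease of the objective gap when
`x_{k+1} ∈ R_1^1` and `0 ≤ f_k − f_ref < ζ²/κ³`. -/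
theorem rc_region1_sub1_newton_sublinear
    (f_ref f_k f_k1 G κ ζ : ℝ)
    (hG : 0 ≤ G) (hκ : 0 < κ) (hζ : 0 < ζ)
    (h1 : G ≥ κ * (f_k1 - f_ref)) (h2 : κ * (f_k1 - f_ref) ≥ 0)
    (h3 : G ^ 2 < κ * (f_k1 - f_ref))
    (hdec : f_k - f_k1 ≥ G ^ ((3 : ℝ) / 2) / ζ)
    (hnonneg : 0 ≤ f_k - f_ref) (hsmall : f_k - f_ref < ζ ^ 2 / κ ^ 3) :
    f_k1 - f_ref ≤
      (1 / (1 + κ ^ ((3 : ℝ) / 2) / ζ * ((Real.sqrt 2 - 1) / Real.sqrt 2) *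
          Real.sqrt (f_k - f_ref))) ^ 2 * (f_k - f_ref) := by
  have aux : ∀ x : ℝ, 0 ≤ x → x ^ ((3 : ℝ) / 2) = x * Real.sqrt x := by
    intro x hx
    rw [show (3:ℝ)/2 = 1 + 1/2 by norm_num, Real.rpow_add' hx (by norm_num),
      Real.rpow_one, ← Real.sqrt_eq_rpow]
  have hd0 : 0 ≤ f_k1 - f_ref := by nlinarith
  set d := f_k1 - f_ref with hdd
  set D := f_k - f_ref with hDD
  set s := Real.sqrt D with hsd
  set t := Real.sqrt d with htd
  set s2 := Real.sqrt 2 with hs2d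
  have hs2 : s2 ^ 2 = 2 := Real.sq_sqrt (by norm_num)
  have hs2pos : 0 < s2 := Real.sqrt_pos.mpr (by norm_num)
  have hs2gt1 : 1 < s2 := by nlinarith
  have hs0 : 0 ≤ s := Real.sqrt_nonneg _
  have ht0 : 0 ≤ t := Real.sqrt_nonneg _
  have hss : s ^ 2 = D := Real.sq_sqrt hnonneg
  have htt : t ^ 2 = d := Real.sq_sqrt hd0
  have hκs : Real.sqrt κ ^ 2 = κ := Real.sq_sqrt hκ.le
  have hκs0 : 0 < Real.sqrt κ := Real.sqrt_pos.mpr hκ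
  set K := κ * Real.sqrt κ with hKd
  have hK0 : 0 < K := mul_pos hκ hκs0
  rw [aux κ hκ.le]
  set u := K / ζ * ((s2 - 1) / s2) * s with hud
  have hu0 : 0 ≤ u := by
    apply mul_nonneg (mul_nonneg (div_nonneg hK0.le hζ.le) (div_nonneg (by linarith) hs2pos.le)) hs0
  have hE : u * ζ * s2 = K * (s2 - 1) * s := by
    rw [hud]; field_simp
  -- hA
  have hGd : (κ * d) * Real.sqrt (κ * d) ≤ G * Real.sqrt G := by
    have h' : (κ * d) ^ ((3:ℝ)/2) ≤ G ^ ((3:ℝ)/2) :=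
      Real.rpow_le_rpow h2 h1 (by norm_num)
    rwa [aux G hG, aux _ h2] at h'
  have hGdK : K * t ^ 3 = (κ * d) * (Real.sqrt κ * t) := by
    rw [← htt]; ring
  have hsqmul : Real.sqrt (κ * d) = Real.sqrt κ * t := by
    rw [htd, Real.sqrt_mul hκ.le]
  have hdec' : ζ * (D - d) ≥ G * Real.sqrt G := by
    have h0 : 0 ≤ G * Real.sqrt G := mul_nonneg hG (Real.sqrt_nonneg _)
    have := hdec
    rw [aux G hG, ge_iff_le, div_le_iff₀ hζ] at this
    nlinarith [this]
  have hA : ζ * (s ^ 2 - t ^ 2) ≥ K * t ^ 3 := by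
    rw [hss, htt, hGdK, ← hsqmul]
    linarith [hGd, hdec']
  -- hB
  have hsmall' : κ ^ 3 * D < ζ ^ 2 := by
    rw [lt_div_iff₀ (by positivity)] at hsmall
    linarith [hsmall]
  have hKs2 : (K * s) ^ 2 = κ ^ 3 * D := by
    rw [hKd, mul_pow, mul_pow, hκs, hss]; ring
  have hB : K * s < ζ := by
    nlinarith [mul_nonneg hK0.le hs0]
  have hkey := rc_key_aux s t u K ζ s2 hs0 ht0 hu0 hK0 hζ hs2 hs2pos hE hA hB
  have hP : 0 < 1 + u := by linarith
  have hP2 : 0 < (1 + u) ^ 2 := by positivity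
  rw [div_pow, one_pow, one_div, inv_mul_eq_div, le_div_iff₀ hP2]
  calc d * (1 + u) ^ 2 = t ^ 2 * (1 + u) ^ 2 := by rw [htt]
    _ ≤ s ^ 2 := hkey
    _ = D := hss
end

section
/- Let f_ref, f_k, f_{k+1} be real numbers, let D ≥ 0 be a real number (representing the negative-curvature measure (λ(H(x_k)))_− = max{0, −λ_min(H(x_k))}), and let κ, ζ be real numbers with 0 < κ ≤ ζ. Suppose that D³ ≥ κ(f_k − f_ref) ≥ 0 (i.e., x_k lies in subregion R_2^3) and that f_k − f_{k+1} ≥ D³/ζ. Then the objective gap decreases at a linear rate: f_{k+1} − f_ref ≤ (1 − κ/ζ)(f_k − f_ref), where κ/ζ ∈ (0,1]. -/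
/-- Theorem 3.1(a): linear decrease of the objective gap in subregion `R_2^3`. -/
theorem rc_region2_sub3_linear
    (f_ref f_k f_k1 D κ ζ : ℝ)
    (hD : 0 ≤ D) (hκ : 0 < κ) (hκζ : κ ≤ ζ)
    (h1 : D ^ 3 ≥ κ * (f_k - f_ref)) (h2 : κ * (f_k - f_ref) ≥ 0)
    (hdec : f_k - f_k1 ≥ D ^ 3 / ζ) :
    f_k1 - f_ref ≤ (1 - κ / ζ) * (f_k - f_ref) ∧ 0 < κ / ζ ∧ κ / ζ ≤ 1 := by
  have hζ : 0 < ζ := lt_of_lt_of_le hκ hκζ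
  refine ⟨?_, div_pos hκ hζ, (div_le_one hζ).mpr hκζ⟩
  have h3 : κ * (f_k - f_ref) / ζ ≤ D ^ 3 / ζ := by
    exact div_le_div_of_nonneg_right h1 hζ.le
  have := le_trans h3 hdec
  have h4 : f_k1 ≤ f_k - κ * (f_k - f_ref) / ζ := by linarith
  have : (1 - κ / ζ) * (f_k - f_ref) = f_k - f_ref - κ * (f_k - f_ref) / ζ := by
    field_simp
  linarith
end

section
/- Let f_ref, f_k, f_{k+1} be real numbers, let D ≥ 0 be a real number (representing (λ(H(x_k)))_−), and let κ > 0, ζ > 0. Suppose that D² ≥ κ(f_k − f_ref) ≥ 0 but D³ < κ(f_k − f_ref) (i.e., x_k lies in subregion R_2^2) and that f_k − f_{k+1} ≥ D³/ζ. Then κ(f_k − f_ref) < 1, and the objective gap decreases at a sublinear rate: f_{k+1} − f_ref ≤ (1 − (κ^{3/2}/ζ)·√(f_k − f_ref))(f_k − f_ref). -/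
/-- Theorem 3.1(b): sublinear decrease of the objective gap in subregion `R_2^2`. -/
theorem rc_region2_sub2_sublinear
    (f_ref f_k f_k1 D κ ζ : ℝ)
    (hD : 0 ≤ D) (hκ : 0 < κ) (hζ : 0 < ζ)
    (h1 : D ^ 2 ≥ κ * (f_k - f_ref)) (h2 : κ * (f_k - f_ref) ≥ 0)
    (h3 : D ^ 3 < κ * (f_k - f_ref))
    (hdec : f_k - f_k1 ≥ D ^ 3 / ζ) :
    κ * (f_k - f_ref) < 1 ∧
      f_k1 - f_ref ≤
        (1 - κ ^ ((3 : ℝ) / 2) / ζ * Real.sqrt (f_k - f_ref)) * (f_k - f_ref) := by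
  set g := f_k - f_ref with hgdef
  have hg : 0 ≤ g := nonneg_of_mul_nonneg_right h2 hκ
  have hapos : 0 < κ * g := lt_of_le_of_lt (pow_nonneg hD 3) h3
  have hDpos : 0 < D := by
    rcases hD.lt_or_eq with h | h
    · exact h
    · exfalso; nlinarith
  have hDlt1 : D < 1 := by nlinarith
  have hlt1 : κ * g < 1 := by nlinarith
  refine ⟨hlt1, ?_⟩
  have hsa : Real.sqrt (κ * g) ≤ D := by
    rw [show D = Real.sqrt (D ^ 2) by rw [Real.sqrt_sq hD]]
    exact Real.sqrt_le_sqrt h1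
  have hsann : 0 ≤ Real.sqrt (κ * g) := Real.sqrt_nonneg _
  have hcube : (κ * g) * Real.sqrt (κ * g) ≤ D ^ 3 := by
    have := pow_le_pow_left₀ hsann hsa 3
    have hsq : Real.sqrt (κ * g) ^ 2 = κ * g := Real.sq_sqrt hapos.le
    nlinarith [this, hsq]
  have hsplit : Real.sqrt (κ * g) = Real.sqrt κ * Real.sqrt g := Real.sqrt_mul hκ.le g
  have hrpow : κ ^ ((3 : ℝ) / 2) = κ * Real.sqrt κ := by
    rw [show (3 : ℝ) / 2 = 1 + 1 / 2 by norm_num, Real.rpow_add hκ, Real.rpow_one,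
      ← Real.sqrt_eq_rpow]
  have hkey : κ ^ ((3 : ℝ) / 2) * Real.sqrt g * g ≤ D ^ 3 := by
    rw [hrpow]
    calc κ * Real.sqrt κ * Real.sqrt g * g = (κ * g) * Real.sqrt (κ * g) := by
          rw [hsplit]; ring
      _ ≤ D ^ 3 := hcube
  have hfin : f_k1 - f_ref ≤ g - D ^ 3 / ζ := by
    have : D ^ 3 / ζ ≤ f_k - f_k1 := hdec
    have hgeq : f_k1 - f_ref = g - (f_k - f_k1) := by rw [hgdef]; ring
    linarith
  have hdiv : (κ ^ ((3 : ℝ) / 2) * Real.sqrt g * g) / ζ ≤ D ^ 3 / ζ :=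
    by gcongr
  calc f_k1 - f_ref ≤ g - D ^ 3 / ζ := hfin
    _ ≤ g - (κ ^ ((3 : ℝ) / 2) * Real.sqrt g * g) / ζ := by linarith
    _ = (1 - κ ^ ((3 : ℝ) / 2) / ζ * Real.sqrt g) * g := by ring
end

section
/- Let f_ref, f_k, f_{k+1} be real numbers, let D ≥ 0 be a real number (representing (λ(H(x_k)))_−), and let κ > 0, ζ > 0. Suppose that D ≥ κ(f_k − f_ref) ≥ 0 but D² < κ(f_k − f_ref) (i.e., x_k lies in subregion R_2^1) and that f_k − f_{k+1} ≥ D³/ζ. Then κ(f_k − f_ref) < 1, and the objective gap decreases at a sublinear rate: f_{k+1} − f_ref ≤ (1 − (κ³/ζ)(f_k − f_ref)²)(f_k − f_ref). -/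
/-- Theorem 3.1(c): sublinear decrease of the objective gap in subregion `R_2^1`. -/
theorem rc_region2_sub1_sublinear
    (f_ref f_k f_k1 D κ ζ : ℝ)
    (hD : 0 ≤ D) (hκ : 0 < κ) (hζ : 0 < ζ)
    (h1 : D ≥ κ * (f_k - f_ref)) (h2 : κ * (f_k - f_ref) ≥ 0)
    (h3 : D ^ 2 < κ * (f_k - f_ref))
    (hdec : f_k - f_k1 ≥ D ^ 3 / ζ) :
    κ * (f_k - f_ref) < 1 ∧
      f_k1 - f_ref ≤ (1 - κ ^ 3 / ζ * (f_k - f_ref) ^ 2) * (f_k - f_ref) := by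
  have hD1 : D < 1 := by nlinarith
  constructor
  · linarith
  · have hcube : (κ * (f_k - f_ref)) ^ 3 ≤ D ^ 3 := by exact pow_le_pow_left₀ h2 h1 3
    have h4 : D ^ 3 / ζ ≥ (κ * (f_k - f_ref)) ^ 3 / ζ := by
      gcongr
    have := hdec
    have h5 : f_k1 - f_ref ≤ f_k - f_ref - D ^ 3 / ζ := by linarith
    have h6 : f_k1 - f_ref ≤ f_k - f_ref - (κ * (f_k - f_ref)) ^ 3 / ζ := by linarith
    have : (1 - κ ^ 3 / ζ * (f_k - f_ref) ^ 2) * (f_k - f_ref)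
        = f_k - f_ref - (κ * (f_k - f_ref)) ^ 3 / ζ := by ring
    linarith
end

section
/- Let H be a real symmetric n×n matrix (n ≥ 1) with smallest eigenvalue λ_min(H), and define v₂ : ℝⁿ → ℝ by v₂(s) = (1/2)⟨s, Hs⟩ + (1/3)‖s‖³. Then v₂(0) − inf_{s ∈ ℝⁿ} v₂(s) = (1/6)·(max{0, −λ_min(H)})³. Consequently the second-order reduction measure Δ₂ := 2·3·(v₂(0) − inf v₂) equals ((λ(H))_−)³, where (λ(H))_− = max{0, −λ_min(H)}. -/
open scoped RealInnerProductSpace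

/-- Lemma 6.1, second part: for a real symmetric matrix `H` and
`v₂(s) = (1/2)⟨s, Hs⟩ + (1/3)‖s‖³`, one has
`v₂(0) − inf v₂ = (1/6)·(max 0 (−λ_min(H)))³`, hence
`Δ₂ = 2·3·(v₂(0) − inf v₂) = ((λ(H))₋)³`. -/
theorem rc_Delta2_eq_cube_neg_curvature
    (n : ℕ) (hn : 1 ≤ n)
    (H : Matrix (Fin n) (Fin n) ℝ) (hH : H.IsHermitian)
    (v₂ : EuclideanSpace ℝ (Fin n) → ℝ)
    (hv₂ : ∀ s, v₂ s = (1 / 2) * ⟪s, Matrix.toEuclideanLin H s⟫ + (1 / 3) * ‖s‖ ^ 3) :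
    haveI : Nonempty (Fin n) := ⟨⟨0, hn⟩⟩
    v₂ 0 - (⨅ s, v₂ s) = (1 / 6) * (max 0 (-(⨅ i, hH.eigenvalues i))) ^ 3 ∧
      (2 : ℝ) * 3 * (v₂ 0 - (⨅ s, v₂ s)) = (max 0 (-(⨅ i, hH.eigenvalues i))) ^ 3 := by
  haveI : Nonempty (Fin n) := ⟨⟨0, hn⟩⟩
  set lam : ℝ := ⨅ i, hH.eigenvalues i with hlam
  set M : ℝ := max 0 (-lam) with hMdef
  have h0 : v₂ 0 = 0 := by simp [hv₂]
  set b := hH.eigenvectorBasis with hb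
  have hTb : ∀ i, Matrix.toEuclideanLin H (b i) = hH.eigenvalues i • (b i) := by
    intro i
    have := hH.mulVec_eigenvectorBasis i
    ext j
    have := congrFun this j
    simpa [Matrix.toEuclideanLin_apply] using this
  have hsym := Matrix.isHermitian_iff_isSymmetric.1 hH
  -- Rayleigh lower bound
  have hray : ∀ s : EuclideanSpace ℝ (Fin n),
      lam * ‖s‖ ^ 2 ≤ ⟪s, Matrix.toEuclideanLin H s⟫ := by
    intro s
    have h1 : ⟪s, Matrix.toEuclideanLin H s⟫ = ∑ i, hH.eigenvalues i * (⟪b i, s⟫) ^ 2 := by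
      rw [← b.sum_inner_mul_inner s (Matrix.toEuclideanLin H s)]
      refine Finset.sum_congr rfl fun i _ => ?_
      have : ⟪b i, Matrix.toEuclideanLin H s⟫ = hH.eigenvalues i * ⟪b i, s⟫ := by
        rw [← hsym (b i) s, hTb i, real_inner_smul_left]
      rw [this, real_inner_comm s (b i)]; ring
    have h2 : ‖s‖ ^ 2 = ∑ i, (⟪b i, s⟫) ^ 2 := by
      rw [← real_inner_self_eq_norm_sq, ← b.sum_inner_mul_inner s s]
      refine Finset.sum_congr rfl fun i _ => ?_
      rw [real_inner_comm s (b i)]; ring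
    rw [h1, h2, Finset.mul_sum]
    refine Finset.sum_le_sum fun i _ => ?_
    exact mul_le_mul_of_nonneg_right (ciInf_le (Set.finite_range _).bddBelow i) (sq_nonneg _)
  -- lower bound on v₂
  have hlow : ∀ s, -(1 / 6) * M ^ 3 ≤ v₂ s := by
    intro s
    have ht : (0 : ℝ) ≤ ‖s‖ := norm_nonneg s
    have hr := hray s
    rw [hv₂ s]
    rcases le_or_gt 0 lam with h | h
    · have hM0 : M = 0 := by rw [hMdef, max_eq_left (by linarith)]
      rw [hM0]
      have h1 : 0 ≤ lam * ‖s‖ ^ 2 := mul_nonneg h (sq_nonneg _)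
      have h2 : 0 ≤ ‖s‖ ^ 3 := by positivity
      nlinarith
    · have hM0 : M = -lam := by rw [hMdef, max_eq_right (by linarith)]
      rw [hM0]
      have key : 0 ≤ (‖s‖ + lam) ^ 2 * (2 * ‖s‖ - lam) :=
        mul_nonneg (sq_nonneg _) (by linarith)
      nlinarith
  have hbdd : BddBelow (Set.range v₂) := ⟨-(1 / 6) * M ^ 3, by rintro y ⟨s, rfl⟩; exact hlow s⟩
  -- the bound is attained
  have hattain : ∃ s, v₂ s = -(1 / 6) * M ^ 3 := by
    rcases le_or_gt 0 lam with h | h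
    · refine ⟨0, ?_⟩
      rw [h0, hMdef, max_eq_left (by linarith)]; ring
    · obtain ⟨i₀, hi₀⟩ := exists_eq_ciInf_of_finite (f := hH.eigenvalues)
      have hMv : M = -lam := by rw [hMdef, max_eq_right (by linarith)]
      refine ⟨(-lam) • b i₀, ?_⟩
      have hnb : ‖b i₀‖ = 1 := b.orthonormal.1 i₀
      have hns : ‖(-lam) • b i₀‖ = -lam := by
        rw [norm_smul, hnb, mul_one, Real.norm_eq_abs, abs_of_pos (by linarith)]
      have hT : Matrix.toEuclideanLin H ((-lam) • b i₀) = ((-lam) * lam) • b i₀ := by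
        rw [map_smul, hTb i₀, hi₀, smul_smul]
      rw [hv₂, hT, hns, real_inner_smul_left, real_inner_smul_right,
        real_inner_self_eq_norm_sq, hnb, hMv]
      ring
  have hinf : (⨅ s, v₂ s) = -(1 / 6) * M ^ 3 := by
    obtain ⟨s₀, hs₀⟩ := hattain
    exact le_antisymm (hs₀ ▸ ciInf_le hbdd s₀) (le_ciInf hlow)
  rw [h0, hinf]
  constructor <;> ring
end

section
/- Let p ≥ 2 be an integer, let f_ref, f_0, f_k, f_{k+1} be real numbers with f_{k+1} ≤ f_0 and f_ref ≤ f_{k+1}, let G ≥ 0 be a real number (representing ‖g(x_{k+1})‖), and let κ > 0, ζ > 0. Suppose that G² ≥ κ(f_{k+1} − f_ref) ≥ 0 (i.e., x_{k+1} lies in subregion R_1^2), that f_k − f_{k+1} ≥ G^{(p+1)/p}/ζ, and that f_k − f_ref ≥ (κ^{p+1}/ζ^{2p})^{1/(p−1)}. Then the objective gap decreases at a linear rate: f_{k+1} − f_ref ≤ ((f_0 − f_ref)^{(p−1)/(2p)} / (κ^{(p+1)/(2p)}/ζ + (f_0 − f_ref)^{(p−1)/(2p)})) · (f_k − f_ref).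 -/
/-!
Write `Δ = f_{k+1} − f_ref` and `e = (p+1)/(2p)`, `θ = (p−1)/(2p)`, so `θ + e = 1`.
Membership in `R_1^2` gives `‖g‖ ≥ (κΔ)^{1/2}`, so the sufficient-decrease condition yields
`f_k − f_ref ≥ Δ + (κ^e/ζ) Δ^e`. Since `Δ ≤ f_0 − f_ref`, interpolation gives
`Δ = Δ^θ Δ^e ≤ (f_0 − f_ref)^θ Δ^e`, which turns the previous bound into a linear contraction.
-/

open Real

lemma Real.rpow_div_two_le_rpow_of_le_sq {a G r : ℝ} (ha : 0 ≤ a) (hG : 0 ≤ G)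
    (h : a ≤ G ^ 2) (hr : 0 ≤ r) : a ^ (r / 2) ≤ G ^ r := by
  rw [rpow_div_two_eq_sqrt r ha]
  exact rpow_le_rpow (sqrt_nonneg a) (sqrt_le_iff.mpr ⟨hG, h⟩) hr

lemma Real.le_rpow_mul_rpow_of_le {x y θ e : ℝ} (hx : 0 ≤ x) (hxy : x ≤ y) (hθ : 0 ≤ θ)
    (hsum : θ + e = 1) : x ≤ y ^ θ * x ^ e :=
  calc x = x ^ θ * x ^ e := by rw [← rpow_add' hx (by rw [hsum]; norm_num), hsum, rpow_one]
    _ ≤ y ^ θ * x ^ e := by gcongr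

lemma Real.le_mul_of_add_mul_rpow_le {x y z c θ e : ℝ} (hx : 0 ≤ x) (hxy : x ≤ y) (hc : 0 < c)
    (hθ : 0 ≤ θ) (hsum : θ + e = 1) (hdec : x + c * x ^ e ≤ z) :
    x ≤ y ^ θ / (c + y ^ θ) * z := by
  have hyθ : 0 ≤ y ^ θ := rpow_nonneg (hx.trans hxy) θ
  have hinterp := le_rpow_mul_rpow_of_le hx hxy hθ hsum
  rw [div_mul_eq_mul_div, le_div_iff₀ (by positivity)]
  nlinarith [mul_le_mul_of_nonneg_left hdec hyθ, mul_le_mul_of_nonneg_left hinterp hc.le]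

theorem rc_regionp_sub2_linear_general
    (p : ℕ) (hp : 2 ≤ p)
    (f_ref f_0 f_k f_k1 G κ ζ : ℝ)
    (hmono : f_k1 ≤ f_0) (href : f_ref ≤ f_k1)
    (hG : 0 ≤ G) (hκ : 0 < κ) (hζ : 0 < ζ)
    (h1 : G ^ 2 ≥ κ * (f_k1 - f_ref)) (h2 : κ * (f_k1 - f_ref) ≥ 0)
    (hdec : f_k - f_k1 ≥ G ^ (((p : ℝ) + 1) / p) / ζ) :
    f_k1 - f_ref ≤
      ((f_0 - f_ref) ^ (((p : ℝ) - 1) / (2 * p)) /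
        (κ ^ (((p : ℝ) + 1) / (2 * p)) / ζ + (f_0 - f_ref) ^ (((p : ℝ) - 1) / (2 * p)))) *
        (f_k - f_ref) := by
  have hp1 : (1 : ℝ) ≤ p := by exact_mod_cast (by omega : 1 ≤ p)
  have hsum : ((p : ℝ) - 1) / (2 * p) + ((p : ℝ) + 1) / (2 * p) = 1 := by field_simp; ring
  have hgrad : (κ * (f_k1 - f_ref)) ^ (((p : ℝ) + 1) / (2 * p)) ≤ G ^ (((p : ℝ) + 1) / p) := by
    rw [show ((p : ℝ) + 1) / (2 * p) = ((p + 1) / p) / 2 by ring]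
    exact rpow_div_two_le_rpow_of_le_sq h2 hG h1 (by positivity)
  rw [mul_rpow hκ.le (by linarith)] at hgrad
  refine le_mul_of_add_mul_rpow_le (by linarith) (by linarith) (by positivity)
    (div_nonneg (by linarith) (by positivity)) hsum ?_
  have hstep : κ ^ (((p : ℝ) + 1) / (2 * p)) * (f_k1 - f_ref) ^ (((p : ℝ) + 1) / (2 * p)) / ζ
      ≤ f_k - f_k1 := le_trans (by gcongr) hdec
  rw [div_mul_eq_mul_div]
  linarith

/-- Theorem 6.1(a), first case: linear decrease of the objective gap when
`x_{k+1} ∈ R_1^2` and `f_k − f_ref ≥ (κ^{p+1}/ζ^{2p})^{1/(p−1)}`. -/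
theorem rc_regionp_sub2_linear
    (p : ℕ) (hp : 2 ≤ p)
    (f_ref f_0 f_k f_k1 G κ ζ : ℝ)
    (hmono : f_k1 ≤ f_0) (href : f_ref ≤ f_k1)
    (hG : 0 ≤ G) (hκ : 0 < κ) (hζ : 0 < ζ)
    (h1 : G ^ 2 ≥ κ * (f_k1 - f_ref)) (h2 : κ * (f_k1 - f_ref) ≥ 0)
    (hdec : f_k - f_k1 ≥ G ^ (((p : ℝ) + 1) / p) / ζ)
    (hlarge : f_k - f_ref ≥ (κ ^ (p + 1) / ζ ^ (2 * p)) ^ ((1 : ℝ) / ((p : ℝ) - 1))) :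
    f_k1 - f_ref ≤
      ((f_0 - f_ref) ^ (((p : ℝ) - 1) / (2 * p)) /
        (κ ^ (((p : ℝ) + 1) / (2 * p)) / ζ + (f_0 - f_ref) ^ (((p : ℝ) - 1) / (2 * p)))) *
        (f_k - f_ref) :=
  rc_regionp_sub2_linear_general p hp f_ref f_0 f_k f_k1 G κ ζ hmono href hG hκ hζ h1 h2 hdec
end

section
/- Let p ≥ 2 be an integer, let f_ref, f_k, f_{k+1} be real numbers with f_ref ≤ f_{k+1}, let G ≥ 0 be a real number (representing ‖g(x_{k+1})‖), and let κ > 0, ζ > 0. Suppose that G² ≥ κ(f_{k+1} − f_ref) ≥ 0 (i.e., x_{k+1} lies in subregion R_1^2), that f_k − f_{k+1} ≥ G^{(p+1)/p}/ζ, and that f_k − f_ref < (κ^{p+1}/ζ^{2p})^{1/(p−1)}. Then the objective gap decreases at a superlinear rate: f_{k+1} − f_ref ≤ ((f_k − f_ref) / (κ^{p+1}/ζ^{2p})^{1/(p−1)})^{(p−1)/(p+1)} · (f_k − f_ref). -/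
/-!
Write `Δ = f_{k+1} − f_ref` and `D = f_k − f_ref`. The decrease condition gives
`G^{(p+1)/p} ≤ ζ D`, hence `κ Δ ≤ G² ≤ (ζ D)^{2p/(p+1)}`. Since
`((κ^{p+1}/ζ^{2p})^{1/(p−1)})^{(p−1)/(p+1)} = κ / ζ^{2p/(p+1)}` and
`(p−1)/(p+1) + 1 = 2p/(p+1)`, the claimed bound is exactly `(ζ D)^{2p/(p+1)} / κ`.
-/

open Real

lemma rpow_le_rpow_div_of_rpow_le {x y a b : ℝ} (hx : 0 ≤ x) (ha : 0 < a) (hb : 0 ≤ b)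
    (h : x ^ a ≤ y) : x ^ b ≤ y ^ (b / a) :=
  calc x ^ b = (x ^ a) ^ (b / a) := by rw [← rpow_mul hx, mul_div_cancel₀ b ha.ne']
    _ ≤ y ^ (b / a) := rpow_le_rpow (rpow_nonneg hx a) h (div_nonneg hb ha.le)

lemma rpow_one_div_sub_one_rpow {B q : ℝ} (hB : 0 ≤ B) (hq : q ≠ 1) :
    (B ^ (1 / (q - 1))) ^ ((q - 1) / (q + 1)) = B ^ (1 / (q + 1)) := by
  have hq' : q - 1 ≠ 0 := sub_ne_zero.mpr hq
  rw [← rpow_mul hB]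
  congr 1
  field_simp

lemma pow_div_pow_rpow_one_div (p : ℕ) {κ ζ : ℝ} (hκ : 0 ≤ κ) (hζ : 0 ≤ ζ) :
    (κ ^ (p + 1) / ζ ^ (2 * p)) ^ (1 / ((p : ℝ) + 1)) = κ / ζ ^ (2 * p / ((p : ℝ) + 1)) := by
  have hp : (p : ℝ) + 1 ≠ 0 := by positivity
  rw [div_rpow (by positivity) (by positivity), ← rpow_natCast κ, ← rpow_natCast ζ,
    ← rpow_mul hκ, ← rpow_mul hζ]
  push_cast
  rw [mul_one_div_cancel hp, rpow_one, mul_one_div]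

lemma superlinear_rate_mul_eq {p : ℕ} (hp : 1 < p) {κ ζ D : ℝ} (hκ : 0 < κ) (hζ : 0 < ζ)
    (hD : 0 ≤ D) :
    (D / (κ ^ (p + 1) / ζ ^ (2 * p)) ^ ((1 : ℝ) / ((p : ℝ) - 1))) ^
        (((p : ℝ) - 1) / ((p : ℝ) + 1)) * D =
      (ζ * D) ^ (2 * p / ((p : ℝ) + 1)) / κ := by
  have hp' : (1 : ℝ) < p := by exact_mod_cast hp
  have hexp : ((p : ℝ) - 1) / ((p : ℝ) + 1) + 1 = 2 * p / ((p : ℝ) + 1) := by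
    field_simp
    ring
  rw [div_rpow hD (by positivity), rpow_one_div_sub_one_rpow (by positivity) hp'.ne',
    pow_div_pow_rpow_one_div p hκ.le hζ.le, mul_rpow hζ.le hD, ← hexp,
    rpow_add' hD (by rw [hexp]; positivity), rpow_one]
  have : 0 < ζ ^ (2 * p / ((p : ℝ) + 1)) := by positivity
  field_simp

theorem rc_regionp_sub2_superlinear_general
    (p : ℕ) (hp : 2 ≤ p)
    (f_ref f_k f_k1 G κ ζ : ℝ)
    (href : f_ref ≤ f_k1)
    (hG : 0 ≤ G) (hκ : 0 < κ) (hζ : 0 < ζ)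
    (h1 : G ^ 2 ≥ κ * (f_k1 - f_ref))
    (hdec : f_k - f_k1 ≥ G ^ (((p : ℝ) + 1) / p) / ζ) :
    f_k1 - f_ref ≤
      ((f_k - f_ref) / (κ ^ (p + 1) / ζ ^ (2 * p)) ^ ((1 : ℝ) / ((p : ℝ) - 1))) ^
          (((p : ℝ) - 1) / ((p : ℝ) + 1)) * (f_k - f_ref) := by
  have hp' : (0 : ℝ) < p := by positivity
  have hD : 0 ≤ f_k - f_ref := by
    have := div_nonneg (rpow_nonneg hG (((p : ℝ) + 1) / p)) hζ.le
    linarith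
  have hgap : G ^ (((p : ℝ) + 1) / p) ≤ ζ * (f_k - f_ref) :=
    calc G ^ (((p : ℝ) + 1) / p) ≤ ζ * (f_k - f_k1) := (div_le_iff₀' hζ).mp hdec
      _ ≤ ζ * (f_k - f_ref) := by gcongr
  have hsq : G ^ 2 ≤ (ζ * (f_k - f_ref)) ^ (2 * p / ((p : ℝ) + 1)) := by
    have := rpow_le_rpow_div_of_rpow_le hG (by positivity) zero_le_two hgap
    rwa [rpow_two, div_div_eq_mul_div] at this
  rw [superlinear_rate_mul_eq (by omega) hκ hζ hD, le_div_iff₀ hκ]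
  linarith

/-- Theorem 6.1(a), second case: superlinear decrease of the objective gap when
`x_{k+1} ∈ R_1^2` and `f_k − f_ref < (κ^{p+1}/ζ^{2p})^{1/(p−1)}`. -/
theorem rc_regionp_sub2_superlinear
    (p : ℕ) (hp : 2 ≤ p)
    (f_ref f_k f_k1 G κ ζ : ℝ)
    (href : f_ref ≤ f_k1)
    (hG : 0 ≤ G) (hκ : 0 < κ) (hζ : 0 < ζ)
    (h1 : G ^ 2 ≥ κ * (f_k1 - f_ref)) (h2 : κ * (f_k1 - f_ref) ≥ 0)
    (hdec : f_k - f_k1 ≥ G ^ (((p : ℝ) + 1) / p) / ζ)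
    (hsmall : f_k - f_ref < (κ ^ (p + 1) / ζ ^ (2 * p)) ^ ((1 : ℝ) / ((p : ℝ) - 1))) :
    f_k1 - f_ref ≤
      ((f_k - f_ref) / (κ ^ (p + 1) / ζ ^ (2 * p)) ^ ((1 : ℝ) / ((p : ℝ) - 1))) ^
          (((p : ℝ) - 1) / ((p : ℝ) + 1)) * (f_k - f_ref) :=
  rc_regionp_sub2_superlinear_general p hp f_ref f_k f_k1 G κ ζ href hG hκ hζ h1 hdec
end

section
/- Let p ≥ 1 be an integer, let f_ref, f_k, f_{k+1} be real numbers, let G ≥ 0 be a real number (representing ‖g(x_{k+1})‖), and let κ > 0, ζ > 0. Suppose that G ≥ κ(f_{k+1} − f_ref) ≥ 0 but G² < κ(f_{k+1} − f_ref) (i.e., x_{k+1} lies in subregion R_1^1), and that f_k − f_{k+1} ≥ G^{(p+1)/p}/ζ. Then κ(f_{k+1} − f_ref) < 1; moreover, if additionally f_k − f_ref ≥ ζ^p/κ^{p+1}, then the objective gap decreases at a superlinear rate: f_{k+1} − f_ref ≤ (ζ^p/(κ^{p+1}(f_k − f_ref)))^{1/(p+1)} · (f_k − f_ref). -/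
/-!
Write `A = κ (f_{k+1} - f_ref)` and `D = f_k - f_ref`. From `G² < A ≤ G` we get `G < 1`, hence
`A < 1`. Raising `A ≤ G` to the power `(p+1)/p` and using the sufficient decrease gives
`A^((p+1)/p) ≤ ζ D`, i.e. `A ≤ (ζ D)^(p/(p+1))`, and the right-hand side of the claimed bound is
exactly `(ζ D)^(p/(p+1)) / κ`.
-/

theorem lt_one_of_sq_lt_of_le {a g : ℝ} (hsq : g ^ 2 < a) (hag : a ≤ g) : a < 1 := by
  nlinarith

theorem le_rpow_inv_of_le_of_rpow_le {a g c r : ℝ} (ha : 0 ≤ a) (hag : a ≤ g) (hr : 0 < r)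
    (hgc : g ^ r ≤ c) : a ≤ c ^ r⁻¹ :=
  (Real.le_rpow_inv_iff_of_pos ha ((Real.rpow_nonneg (ha.trans hag) r).trans hgc) hr).mpr
    ((Real.rpow_le_rpow ha hag hr.le).trans hgc)

theorem rpow_one_div_succ_mul_eq (p : ℕ) {ζ κ D : ℝ} (hζ : 0 ≤ ζ) (hκ : 0 < κ) (hD : 0 < D) :
    (ζ ^ p / (κ ^ (p + 1) * D)) ^ ((1 : ℝ) / ((p : ℝ) + 1)) * D =
      (ζ * D) ^ ((p : ℝ) / ((p : ℝ) + 1)) / κ := by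
  have hp : (p : ℝ) + 1 ≠ 0 := by positivity
  have hκ_root : (κ ^ (p + 1)) ^ ((1 : ℝ) / ((p : ℝ) + 1)) = κ := by
    rw [← Real.rpow_natCast_mul hκ.le, Nat.cast_succ, mul_one_div_cancel hp, Real.rpow_one]
  have hD_split : D = D ^ ((1 : ℝ) / ((p : ℝ) + 1)) * D ^ ((p : ℝ) / ((p : ℝ) + 1)) := by
    rw [← Real.rpow_add hD, ← add_div, add_comm, div_self hp, Real.rpow_one]
  rw [Real.div_rpow (by positivity) (by positivity), Real.mul_rpow (by positivity) hD.le,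
    hκ_root, ← Real.rpow_natCast_mul hζ, mul_one_div, Real.mul_rpow hζ hD.le]
  nth_rw 2 [hD_split]
  field_simp

theorem rc_regionp_sub1_superlinear_general
    (p : ℕ) (hp : 1 ≤ p)
    (f_ref f_k f_k1 G κ ζ : ℝ)
    (hκ : 0 < κ) (hζ : 0 < ζ)
    (h1 : G ≥ κ * (f_k1 - f_ref)) (h2 : κ * (f_k1 - f_ref) ≥ 0)
    (h3 : G ^ 2 < κ * (f_k1 - f_ref))
    (hdec : f_k - f_k1 ≥ G ^ (((p : ℝ) + 1) / p) / ζ) :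
    κ * (f_k1 - f_ref) < 1 ∧
      (f_k - f_ref ≥ ζ ^ p / κ ^ (p + 1) →
        f_k1 - f_ref ≤
          (ζ ^ p / (κ ^ (p + 1) * (f_k - f_ref))) ^ ((1 : ℝ) / ((p : ℝ) + 1)) *
            (f_k - f_ref)) := by
  refine ⟨lt_one_of_sq_lt_of_le h3 h1, fun hD => ?_⟩
  have hD_pos : 0 < f_k - f_ref := lt_of_lt_of_le (by positivity) hD
  have hgap : 0 ≤ f_k1 - f_ref := nonneg_of_mul_nonneg_right h2 hκ
  have hGr : G ^ (((p : ℝ) + 1) / p) ≤ ζ * (f_k - f_ref) := by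
    have := (div_le_iff₀ hζ).mp hdec
    nlinarith
  have hp_pos : (0 : ℝ) < p := by exact_mod_cast hp
  have hkey := le_rpow_inv_of_le_of_rpow_le h2 h1 (by positivity) hGr
  rw [inv_div] at hkey
  rw [rpow_one_div_succ_mul_eq p hζ.le hκ hD_pos, le_div_iff₀ hκ]
  linarith

/-- Theorem 6.1(b), first case: `κ(f_{k+1} − f_ref) < 1`, and superlinear decrease of the
objective gap when `x_{k+1} ∈ R_1^1` and `f_k − f_ref ≥ ζ^p/κ^{p+1}`. -/
theorem rc_regionp_sub1_superlinear
    (p : ℕ) (hp : 1 ≤ p)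
    (f_ref f_k f_k1 G κ ζ : ℝ)
    (hG : 0 ≤ G) (hκ : 0 < κ) (hζ : 0 < ζ)
    (h1 : G ≥ κ * (f_k1 - f_ref)) (h2 : κ * (f_k1 - f_ref) ≥ 0)
    (h3 : G ^ 2 < κ * (f_k1 - f_ref))
    (hdec : f_k - f_k1 ≥ G ^ (((p : ℝ) + 1) / p) / ζ) :
    κ * (f_k1 - f_ref) < 1 ∧
      (f_k - f_ref ≥ ζ ^ p / κ ^ (p + 1) →
        f_k1 - f_ref ≤
          (ζ ^ p / (κ ^ (p + 1) * (f_k - f_ref))) ^ ((1 : ℝ) / ((p : ℝ) + 1)) *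
            (f_k - f_ref)) :=
  rc_regionp_sub1_superlinear_general p hp f_ref f_k f_k1 G κ ζ hκ hζ h1 h2 h3 hdec
end

section
/- Let p ≥ 1 be an integer, let f_ref, f_k, f_{k+1} be real numbers, let G ≥ 0 be a real number (representing ‖g(x_{k+1})‖), and let κ > 0, ζ > 0. Suppose that G ≥ κ(f_{k+1} − f_ref) ≥ 0 but G² < κ(f_{k+1} − f_ref) (i.e., x_{k+1} lies in subregion R_1^1), that f_k − f_{k+1} ≥ G^{(p+1)/p}/ζ, and that 0 ≤ f_k − f_ref < ζ^p/κ^{p+1}. Then the objective gap decreases at a sublinear rate: f_{k+1} − f_ref ≤ (1 / (1 + (κ^{(p+1)/p}/ζ)·((2^{1/p} − 1)/2^{1/p})·(f_k − f_ref)^{1/p}))^p · (f_k − f_ref). -/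
lemma rc_key_ineq (p : ℕ) (hp : 1 ≤ p) (u : ℝ) (hu0 : 0 < u) (hu1 : u ≤ 1)
    (hup : u ^ p = 1 / 2) (s : ℝ) (hs0 : 0 ≤ s) (hs1 : s ≤ 1) :
    (1 + (1 - u) * s) ^ (p + 1) ≤ 1 + (1 + (1 - u)) * s := by
  have hP1 : (1 : ℝ) ≤ (p : ℝ) := by exact_mod_cast hp
  have hP0 : (0 : ℝ) < (p : ℝ) := lt_of_lt_of_le one_pos hP1
  set θ : ℝ := 1 - u with hθdef
  have hθ0 : 0 ≤ θ := by simp only [hθdef]; linarith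
  have hθ1 : θ ≤ 1 := by simp only [hθdef]; linarith
  -- Step 1: p * θ ≥ 1/2
  have hPθ : 1 / 2 ≤ (p : ℝ) * θ := by
    have h := one_add_mul_le_pow (a := -(1 / (2 * (p : ℝ))))
      (by
        have h12 : 1 / (2 * (p : ℝ)) ≤ 1 / 2 := by
          apply one_div_le_one_div_of_le <;> linarith
        linarith) p
    have he1 : 1 + (p : ℝ) * -(1 / (2 * (p : ℝ))) = 1 / 2 := by field_simp; ring
    have he2 : 1 + -(1 / (2 * (p : ℝ))) = 1 - 1 / (2 * (p : ℝ)) := by ring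
    rw [he1, he2] at h
    have hbase : (0 : ℝ) ≤ 1 - 1 / (2 * (p : ℝ)) := by
      have h12 : 1 / (2 * (p : ℝ)) ≤ 1 / 2 := by
        apply one_div_le_one_div_of_le <;> linarith
      linarith
    have hub : u ≤ 1 - 1 / (2 * (p : ℝ)) :=
      (pow_le_pow_iff_left₀ hu0.le hbase (show p ≠ 0 by omega)).mp (by rw [hup]; exact h)
    have hθlb : 1 / (2 * (p : ℝ)) ≤ θ := by simp only [hθdef]; linarith
    calc (1/2 : ℝ) = (p : ℝ) * (1 / (2 * (p : ℝ))) := by field_simp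
      _ ≤ (p : ℝ) * θ := mul_le_mul_of_nonneg_left hθlb hP0.le
  -- Step 2: endpoint inequality (1+θ)^(p+1) ≤ 2+θ
  have hend : (1 + θ) ^ (p + 1) ≤ 2 + θ := by
    have he3 : (1 + θ) * u = 1 - θ ^ 2 := by simp only [hθdef]; ring
    have he4 : (1 + θ) ^ p = 2 * (1 - θ ^ 2) ^ p := by
      have : (1 + θ) ^ p * u ^ p = (1 - θ ^ 2) ^ p := by rw [← mul_pow, he3]
      rw [hup] at this; linarith
    have hb2 : 1 + (p : ℝ) * θ ^ 2 ≤ (1 + θ ^ 2) ^ p :=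
      one_add_mul_le_pow (a := θ ^ 2) (by nlinarith) p
    have hXnn : (0 : ℝ) ≤ (1 - θ ^ 2) ^ p := pow_nonneg (by nlinarith) p
    have he5 : (1 - θ ^ 2) ^ p * (1 + θ ^ 2) ^ p ≤ 1 := by
      rw [← mul_pow]
      have he : (1 - θ ^ 2) * (1 + θ ^ 2) = 1 - θ ^ 4 := by ring
      rw [he]
      have h2 : θ ^ 2 ≤ 1 := pow_le_one₀ hθ0 hθ1
      have h4 : θ ^ 4 ≤ 1 := pow_le_one₀ hθ0 hθ1
      have h40 : 0 ≤ θ ^ 4 := pow_nonneg hθ0 4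
      exact pow_le_one₀ (by linarith) (by linarith)
    have hpos2 : (0 : ℝ) < 1 + (p : ℝ) * θ ^ 2 := by positivity
    have hXp : (1 - θ ^ 2) ^ p * (1 + (p : ℝ) * θ ^ 2) ≤ 1 :=
      le_trans (mul_le_mul_of_nonneg_left hb2 hXnn) he5
    have h7 : 2 * (1 + θ) ≤ (2 + θ) * (1 + (p : ℝ) * θ ^ 2) := by
      nlinarith [mul_nonneg (show (0:ℝ) ≤ 2 * ((p:ℝ) * θ) - 1 by nlinarith [hPθ]) hθ0,
        mul_nonneg (mul_nonneg hP0.le (pow_nonneg hθ0 2)) hθ0]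
    have hfin : 2 * (1 - θ ^ 2) ^ p * (1 + θ) ≤ 2 + θ := by
      nlinarith [mul_le_mul_of_nonneg_left hXp (show (0:ℝ) ≤ 2 * (1 + θ) by linarith), h7]
    calc (1 + θ) ^ (p + 1) = (1 + θ) ^ p * (1 + θ) := by rw [pow_succ]
      _ = 2 * (1 - θ ^ 2) ^ p * (1 + θ) := by rw [he4]
      _ ≤ 2 + θ := hfin
  -- Step 3: chord (convexity)
  have hcx := (convexOn_pow (p + 1)).2 (Set.mem_Ici.mpr zero_le_one)
    (Set.mem_Ici.mpr (by linarith : (0:ℝ) ≤ 1 + θ))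
    (by linarith : (0:ℝ) ≤ 1 - s) hs0 (by ring)
  simp only [smul_eq_mul] at hcx
  have hbase : (1 - s) * 1 + s * (1 + θ) = 1 + θ * s := by ring
  rw [hbase, one_pow] at hcx
  have hlast : s * (1 + θ) ^ (p + 1) ≤ s * (2 + θ) := mul_le_mul_of_nonneg_left hend hs0
  calc (1 + θ * s) ^ (p + 1) ≤ (1 - s) * 1 + s * (1 + θ) ^ (p + 1) := hcx
    _ ≤ (1 - s) * 1 + s * (2 + θ) := by linarith
    _ = 1 + (1 + θ) * s := by ring


/-- Theorem 6.1(b), second case: sublinear decrease of the objective gap when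
`x_{k+1} ∈ R_1^1` and `0 ≤ f_k − f_ref < ζ^p/κ^{p+1}`. -/
theorem rc_regionp_sub1_sublinear
    (p : ℕ) (hp : 1 ≤ p)
    (f_ref f_k f_k1 G κ ζ : ℝ)
    (hG : 0 ≤ G) (hκ : 0 < κ) (hζ : 0 < ζ)
    (h1 : G ≥ κ * (f_k1 - f_ref)) (h2 : κ * (f_k1 - f_ref) ≥ 0)
    (h3 : G ^ 2 < κ * (f_k1 - f_ref))
    (hdec : f_k - f_k1 ≥ G ^ (((p : ℝ) + 1) / p) / ζ)
    (hnonneg : 0 ≤ f_k - f_ref) (hsmall : f_k - f_ref < ζ ^ p / κ ^ (p + 1)) :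
    f_k1 - f_ref ≤
      (1 / (1 + κ ^ (((p : ℝ) + 1) / p) / ζ *
          (((2 : ℝ) ^ ((1 : ℝ) / p) - 1) / (2 : ℝ) ^ ((1 : ℝ) / p)) *
          (f_k - f_ref) ^ ((1 : ℝ) / p))) ^ p * (f_k - f_ref) := by
  have hP1 : (1 : ℝ) ≤ (p : ℝ) := by exact_mod_cast hp
  have hP0 : (0 : ℝ) < (p : ℝ) := lt_of_lt_of_le one_pos hP1
  have hPne : (p : ℝ) ≠ 0 := hP0.ne'
  set A : ℝ := f_k - f_ref with hA
  set B : ℝ := f_k1 - f_ref with hB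
  have hκB : 0 < κ * B := lt_of_le_of_lt (sq_nonneg G) h3
  have hB0 : 0 < B := by
    rcases mul_pos_iff.mp hκB with ⟨_, h⟩ | ⟨h, _⟩
    · exact h
    · linarith
  have hG0 : 0 < G := lt_of_lt_of_le (mul_pos hκ hB0) h1
  -- the constant u = 2^{-1/p}
  set v : ℝ := (2 : ℝ) ^ ((1 : ℝ) / (p : ℝ)) with hv
  have hv1 : (1 : ℝ) < v :=
    (Real.one_lt_rpow_iff_of_pos two_pos).mpr (Or.inl ⟨one_lt_two, div_pos one_pos hP0⟩)
  have hv0 : (0 : ℝ) < v := lt_trans one_pos hv1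
  set u : ℝ := v⁻¹ with hu
  have hu0 : 0 < u := by positivity
  have hu1 : u ≤ 1 := by
    rw [hu]
    exact inv_le_one_of_one_le₀ hv1.le
  have hvp : v ^ p = 2 := by
    rw [hv, ← Real.rpow_natCast ((2:ℝ) ^ ((1:ℝ)/(p:ℝ))) p, ← Real.rpow_mul (by norm_num : (0:ℝ) ≤ 2),
      one_div, inv_mul_cancel₀ hPne, Real.rpow_one]
  have hup : u ^ p = 1 / 2 := by
    rw [hu, inv_pow, hvp]; norm_num
  set θ : ℝ := (v - 1) / v with hθ
  have hθu : θ = 1 - u := by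
    rw [hθ, hu]
    field_simp
  have hθ0 : 0 ≤ θ := by rw [hθu]; linarith
  -- the constant c and the quantity s
  set c : ℝ := κ ^ (((p : ℝ) + 1) / (p : ℝ)) / ζ with hc
  have hc0 : 0 < c := div_pos (Real.rpow_pos_of_pos hκ _) hζ
  set s : ℝ := c * A ^ ((1 : ℝ) / (p : ℝ)) with hs
  have hs0 : 0 ≤ s := by
    have := Real.rpow_nonneg hnonneg ((1 : ℝ) / (p : ℝ))
    positivity
  have hk1 : (κ ^ (((p : ℝ) + 1) / (p : ℝ))) ^ p = κ ^ (p + 1) := by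
    rw [← Real.rpow_natCast (κ ^ (((p : ℝ) + 1) / (p : ℝ))) p, ← Real.rpow_mul hκ.le]
    rw [show ((p : ℝ) + 1) / (p : ℝ) * (p : ℝ) = ((p + 1 : ℕ) : ℝ) by push_cast; field_simp]
    exact Real.rpow_natCast κ (p + 1)
  have hA1p : (A ^ ((1 : ℝ) / (p : ℝ))) ^ p = A := by
    rw [← Real.rpow_natCast (A ^ ((1 : ℝ) / (p : ℝ))) p, ← Real.rpow_mul hnonneg,
      one_div, inv_mul_cancel₀ hPne, Real.rpow_one]
  have hsp : s ^ p = κ ^ (p + 1) * A / ζ ^ p := by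
    rw [hs, mul_pow, hc, div_pow, hk1, hA1p]; ring
  have hsplt : s ^ p < 1 := by
    rw [hsp, div_lt_one (by positivity)]
    have := (lt_div_iff₀ (by positivity : (0 : ℝ) < κ ^ (p + 1))).mp hsmall
    linarith [this]
  have hs1 : s ≤ 1 := by
    by_contra hcon
    push_neg at hcon
    have : (1 : ℝ) ≤ s ^ p := one_le_pow₀ hcon.le
    linarith
  -- the descent inequality: B * (1 + c * B^{1/p}) ≤ A
  have h4 : (κ * B) ^ (((p : ℝ) + 1) / (p : ℝ)) ≤ G ^ (((p : ℝ) + 1) / (p : ℝ)) :=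
    Real.rpow_le_rpow h2 h1 (by positivity)
  have h5 : (κ * B) ^ (((p : ℝ) + 1) / (p : ℝ)) =
      κ ^ (((p : ℝ) + 1) / (p : ℝ)) * (B * B ^ ((1 : ℝ) / (p : ℝ))) := by
    rw [Real.mul_rpow hκ.le hB0.le]
    congr 1
    rw [show ((p : ℝ) + 1) / (p : ℝ) = 1 + (1 : ℝ) / (p : ℝ) by field_simp,
      Real.rpow_add hB0, Real.rpow_one]
  have h6 : (κ * B) ^ (((p : ℝ) + 1) / (p : ℝ)) / ζ ≤ G ^ (((p : ℝ) + 1) / (p : ℝ)) / ζ :=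
    (div_le_div_iff_of_pos_right hζ).mpr h4
  have hAB : f_k - f_k1 = A - B := by rw [hA, hB]; ring
  have hstar : B * (1 + c * B ^ ((1 : ℝ) / (p : ℝ))) ≤ A := by
    have h7 : B * (1 + c * B ^ ((1 : ℝ) / (p : ℝ))) =
        B + κ ^ (((p : ℝ) + 1) / (p : ℝ)) * (B * B ^ ((1 : ℝ) / (p : ℝ))) / ζ := by
      rw [hc]; ring
    rw [h7, ← h5]
    rw [hAB] at hdec
    linarith
  -- key inequality
  have hkey := rc_key_ineq p hp u hu0 hu1 hup s hs0 hs1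
  rw [← hθu] at hkey
  -- T and its properties
  set T : ℝ := 1 + c * θ * A ^ ((1 : ℝ) / (p : ℝ)) with hT
  have hTθs : T = 1 + θ * s := by rw [hT, hs]; ring
  have hθs0 : 0 ≤ θ * s := mul_nonneg hθ0 hs0
  have hTpos : 0 < T := by rw [hTθs]; linarith
  have hTp : (0 : ℝ) < T ^ p := by positivity
  have hTs1 : T ^ (p + 1) ≤ T + s := by
    calc T ^ (p + 1) = (1 + θ * s) ^ (p + 1) := by rw [hTθs]
      _ ≤ 1 + (1 + θ) * s := hkey
      _ = (1 + θ * s) + s := by ring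
      _ = T + s := by rw [hTθs]
  -- reduce the goal
  rw [one_div, inv_pow, ← div_eq_inv_mul, le_div_iff₀ hTp]
  by_contra hcon
  push_neg at hcon
  set D : ℝ := A / T ^ p with hD
  clear_value A B v u θ c s T D
  have hDB : D < B := by rw [hD, div_lt_iff₀ hTp]; exact hcon
  have hD0 : 0 ≤ D := by rw [hD]; positivity
  have hDrp : D ^ ((1 : ℝ) / (p : ℝ)) = A ^ ((1 : ℝ) / (p : ℝ)) / T := by
    rw [hD, Real.div_rpow hnonneg hTp.le]
    congr 1
    rw [← Real.rpow_natCast T p, ← Real.rpow_mul hTpos.le, mul_one_div,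
      div_self hPne, Real.rpow_one]
  have hcD : c * D ^ ((1 : ℝ) / (p : ℝ)) = s / T := by
    rw [hDrp, hs]; ring
  have hφD : A ≤ D * (1 + c * D ^ ((1 : ℝ) / (p : ℝ))) := by
    rw [hcD]
    have h8 : A * T ^ (p + 1) ≤ A * (T + s) := mul_le_mul_of_nonneg_left hTs1 hnonneg
    calc A = A * T ^ (p + 1) / T ^ (p + 1) := by field_simp
      _ ≤ A * (T + s) / T ^ (p + 1) := (div_le_div_iff_of_pos_right (by positivity)).mpr h8
      _ = D * (1 + s / T) := by
          rw [hD, pow_succ]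
          field_simp
  have hBrp : D ^ ((1 : ℝ) / (p : ℝ)) ≤ B ^ ((1 : ℝ) / (p : ℝ)) :=
    Real.rpow_le_rpow hD0 hDB.le (by positivity)
  have hDrp0 : 0 ≤ D ^ ((1 : ℝ) / (p : ℝ)) := Real.rpow_nonneg hD0 _
  have hφB : D * (1 + c * D ^ ((1 : ℝ) / (p : ℝ))) < B * (1 + c * B ^ ((1 : ℝ) / (p : ℝ))) := by
    have hx : (0 : ℝ) < 1 + c * D ^ ((1 : ℝ) / (p : ℝ)) := by positivity
    have hstep1 : D * (1 + c * D ^ ((1 : ℝ) / (p : ℝ))) < B * (1 + c * D ^ ((1 : ℝ) / (p : ℝ))) :=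
      mul_lt_mul_of_pos_right hDB hx
    have hstep2 : B * (1 + c * D ^ ((1 : ℝ) / (p : ℝ))) ≤ B * (1 + c * B ^ ((1 : ℝ) / (p : ℝ))) := by
      apply mul_le_mul_of_nonneg_left _ hB0.le
      have := mul_le_mul_of_nonneg_left hBrp hc0.le
      linarith
    linarith
  linarith
end

section
/- Let p ≥ 1 and 1 ≤ q ≤ p be integers, let f_ref, f_k, f_{k+1} be real numbers, let D ≥ 0 be a real number (representing Δ_p(x_k)), and let κ > 0, ζ > 0. Suppose that D^q ≥ κ(f_k − f_ref) ≥ 0 but D^{q+1} < κ(f_k − f_ref) (i.e., x_k lies in subregion R_p^q), and that f_k − f_{k+1} ≥ D^{p+1}/ζ. Then κ(f_k − f_ref) < 1, and the objective gap decreases at a sublinear rate: f_{k+1} − f_ref ≤ (1 − (κ^{(p+1)/q}/ζ)·(f_k − f_ref)^{(p+1−q)/q})(f_k − f_ref). -/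
/-!
On `R_p^q` the bounds `D^(q+1) < κ G ≤ D^q`, with `G = f_k - f_ref`, force `0 < D < 1`, hence
`κ G < 1`. Raising `κ G ≤ D^q` to the power `(p+1)/q` gives `(κ G)^((p+1)/q) ≤ D^(p+1) ≤ ζ (f_k - f_{k+1})`,
and splitting `G^((p+1)/q) = G^((p+1-q)/q) · G` turns this into the claimed contraction of the gap.
-/

open Real

lemma lt_one_of_pow_succ_lt_of_le_pow {D x : ℝ} {q : ℕ} (hle : x ≤ D ^ q)
    (hlt : D ^ (q + 1) < x) : D < 1 := by
  by_contra! h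
  exact absurd (hle.trans (pow_le_pow_right₀ h q.le_succ)) hlt.not_ge

lemma rpow_div_le_pow_of_le_pow {D x m : ℝ} {q : ℕ} (hq : q ≠ 0) (hD : 0 ≤ D) (hm : 0 ≤ m)
    (hx : 0 ≤ x) (h : x ≤ D ^ q) : x ^ (m / q) ≤ D ^ m := by
  calc x ^ (m / q) ≤ (D ^ q) ^ (m / q) := by gcongr
    _ = D ^ m := by
      rw [← rpow_natCast, ← rpow_mul hD, mul_div_cancel₀ _ (Nat.cast_ne_zero.mpr hq)]

lemma mul_rpow_div_natCast {κ G m : ℝ} {q : ℕ} (hq : q ≠ 0) (hκ : 0 ≤ κ) (hG : 0 < G) :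
    (κ * G) ^ (m / q) = κ ^ (m / q) * G ^ ((m - q) / q) * G := by
  have hq' : (q : ℝ) ≠ 0 := Nat.cast_ne_zero.mpr hq
  rw [mul_rpow hκ hG.le, mul_assoc, sub_div, div_self hq', rpow_sub_one hG.ne',
    div_mul_cancel₀ _ hG.ne']

theorem rc_regionp_subq_sublinear_general
    (p q : ℕ) (hq1 : 1 ≤ q)
    (f_ref f_k f_k1 D κ ζ : ℝ)
    (hD : 0 ≤ D) (hκ : 0 < κ) (hζ : 0 < ζ)
    (h1 : D ^ q ≥ κ * (f_k - f_ref))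
    (h3 : D ^ (q + 1) < κ * (f_k - f_ref))
    (hdec : f_k - f_k1 ≥ D ^ (p + 1) / ζ) :
    κ * (f_k - f_ref) < 1 ∧
      f_k1 - f_ref ≤
        (1 - κ ^ (((p : ℝ) + 1) / q) / ζ *
            (f_k - f_ref) ^ (((p : ℝ) + 1 - q) / q)) * (f_k - f_ref) := by
  set G := f_k - f_ref
  have hq : q ≠ 0 := Nat.one_le_iff_ne_zero.mp hq1
  have hκG : 0 < κ * G := (pow_nonneg hD _).trans_lt h3
  have hG : 0 < G := (mul_pos_iff_of_pos_left hκ).mp hκG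
  have hD1 : D < 1 := lt_one_of_pow_succ_lt_of_le_pow h1 h3
  refine ⟨h1.trans_lt (pow_lt_one₀ hD hD1 hq), ?_⟩
  have hrpow : (κ * G) ^ (((p : ℝ) + 1) / q) ≤ D ^ (p + 1) := by
    have := rpow_div_le_pow_of_le_pow hq hD (by positivity : (0 : ℝ) ≤ p + 1) hκG.le h1
    exact_mod_cast this
  rw [mul_rpow_div_natCast hq hκ.le hG] at hrpow
  calc f_k1 - f_ref = G - (f_k - f_k1) := by ring
    _ ≤ G - κ ^ (((p : ℝ) + 1) / q) * G ^ (((p : ℝ) + 1 - q) / q) * G / ζ := by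
      gcongr
      exact hdec.trans' (div_le_div_of_nonneg_right hrpow hζ.le)
    _ = _ := by ring

/-- Theorem 6.2(b): sublinear decrease of the objective gap in subregion `R_p^q`
for `1 ≤ q ≤ p`. -/
theorem rc_regionp_subq_sublinear
    (p q : ℕ) (hp : 1 ≤ p) (hq1 : 1 ≤ q) (hqp : q ≤ p)
    (f_ref f_k f_k1 D κ ζ : ℝ)
    (hD : 0 ≤ D) (hκ : 0 < κ) (hζ : 0 < ζ)
    (h1 : D ^ q ≥ κ * (f_k - f_ref)) (h2 : κ * (f_k - f_ref) ≥ 0)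
    (h3 : D ^ (q + 1) < κ * (f_k - f_ref))
    (hdec : f_k - f_k1 ≥ D ^ (p + 1) / ζ) :
    κ * (f_k - f_ref) < 1 ∧
      f_k1 - f_ref ≤
        (1 - κ ^ (((p : ℝ) + 1) / q) / ζ *
            (f_k - f_ref) ^ (((p : ℝ) + 1 - q) / q)) * (f_k - f_ref) :=
  rc_regionp_subq_sublinear_general p q hq1 f_ref f_k f_k1 D κ ζ hD hκ hζ h1 h3 hdec
end
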